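/- arXiv:2511.09824 — 3 statements merged into one kernel-verified Lean document; each statement's English description precedes it below -/
import Mathlib

section
/- Let (X, R) be a transitive modal space validating the Grzegorczyk axiom. Then the following are equivalent: (1) X validates the Löb axiom, i.e., for every clopen U and every x ∈ X, if (∀y, R x y → ((∀z, R y z → z ∈ U) → y ∈ U)), then (∀y, R x y → y ∈ U); (2) for every clopen U ⊆ X and every x ∈ max_R U, it is not the case that R x x. -/
/-!
If `x` sees a point outside a clopen `U`, compactness and Zorn's lemma give a point `m` of `Uᶜ`
seen by `x` which is maximal in `Uᶜ` up to clusters; the Grzegorczyk axiom rules out proper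
clusters inside a clopen set, so `m ∈ max_R Uᶜ`. If `m` is irreflexive, then `□U` holds at `m`,
and the premise of the Löb axiom forces `m ∈ U`, a contradiction. Conversely, a reflexive
maximal point `x` of `U` refutes the Löb axiom for `Uᶜ` at `x`.
-/

/-- `max_R U = {x ∈ U | ∀ y, R x y → y ∈ U → y = x}`. -/
def maxSet {X : Type*} (R : X → X → Prop) (U : Set X) : Set X :=
  {x | x ∈ U ∧ ∀ y, R x y → y ∈ U → y = x}

section

variable {X : Type*} [TopologicalSpace X] {R : X → X → Prop}

theorem exists_mem_forall_eq_or_rel_of_isClosed [CompactSpace X] [T1Space X]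
    (hpointClosed : ∀ x : X, IsClosed {y | R x y}) (htrans : Transitive R)
    {F : Set X} (hF : IsClosed F) (hne : F.Nonempty) :
    ∃ m ∈ F, ∀ z, R m z → z ∈ F → z = m ∨ R z m := by
  let 𝒮 : Set (Set X) :=
    {C | IsClosed C ∧ C.Nonempty ∧ C ⊆ F ∧ ∀ z ∈ C, ∀ w, R z w → w ∈ F → w ∈ C}
  have hchain : ∀ c ⊆ 𝒮, IsChain (· ⊆ ·) c → c.Nonempty → ∃ lb ∈ 𝒮, ∀ s ∈ c, lb ⊆ s := by
    intro c hc𝒮 hc ⟨C₀, hC₀⟩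
    have : Nonempty c := ⟨⟨C₀, hC₀⟩⟩
    have hdir : DirectedOn (· ⊇ ·) c := fun A hA B hB =>
      (hc.total hA hB).elim (fun h => ⟨A, hA, subset_rfl, h⟩) (fun h => ⟨B, hB, h, subset_rfl⟩)
    refine ⟨⋂₀ c, ⟨isClosed_sInter fun C hC => (hc𝒮 hC).1, ?_, ?_, ?_⟩,
      fun C hC => Set.sInter_subset_of_mem hC⟩
    · exact IsCompact.nonempty_sInter_of_directed_nonempty_isCompact_isClosed
        hdir (fun C hC => (hc𝒮 hC).2.1)
        (fun C hC => (hc𝒮 hC).1.isCompact) (fun C hC => (hc𝒮 hC).1)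
    · exact (Set.sInter_subset_of_mem hC₀).trans (hc𝒮 hC₀).2.2.1
    · exact fun z hz w hzw hwF => Set.mem_sInter.2 fun C hC =>
        (hc𝒮 hC).2.2.2 z (Set.mem_sInter.1 hz C hC) w hzw hwF
  have hF𝒮 : F ∈ 𝒮 := ⟨hF, hne, subset_rfl, fun _ _ w _ hwF => hwF⟩
  obtain ⟨C, -, hCmin⟩ := zorn_superset_nonempty 𝒮 hchain F hF𝒮
  obtain ⟨-, ⟨m, hmC⟩, hCF, hCup⟩ := hCmin.prop
  refine ⟨m, hCF hmC, fun z hmz hzF => ?_⟩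
  -- By minimality `C = {z} ∪ (R[z] ∩ F)`, and `m ∈ C`.
  have hz𝒮 : {z} ∪ {w | R z w} ∩ F ∈ 𝒮 := by
    refine ⟨isClosed_singleton.union ((hpointClosed z).inter hF), ⟨z, Or.inl rfl⟩, ?_, ?_⟩
    · rintro w (rfl | ⟨-, hwF⟩) <;> assumption
    · rintro u (rfl | ⟨hzu, -⟩) w huw hwF
      exacts [Or.inr ⟨huw, hwF⟩, Or.inr ⟨htrans hzu huw, hwF⟩]
  have hzC : z ∈ C := hCup m hmC z hmz hzF
  have hsub : {z} ∪ {w | R z w} ∩ F ⊆ C := by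
    rintro w (rfl | ⟨hzw, hwF⟩)
    exacts [hzC, hCup z hzC w hzw hwF]
  rcases hCmin.2 hz𝒮 hsub hmC with rfl | ⟨hzm, -⟩
  exacts [Or.inl rfl, Or.inr hzm]

theorem mem_maxSet_of_grz [T1Space X]
    (hbasis : ∀ (x : X) (U : Set X), IsOpen U → x ∈ U →
      ∃ V : Set X, IsClopen V ∧ x ∈ V ∧ V ⊆ U)
    (htrans : Transitive R)
    (hgrz : ∀ U : Set X, IsClopen U → ∀ x : X,
      (∀ y, R x y → ((∀ z, R y z → (z ∈ U → ∀ w, R z w → w ∈ U)) → y ∈ U)) → x ∈ U)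
    {F : Set X} (hF : IsClopen F) {m : X} (hmF : m ∈ F)
    (hm : ∀ z, R m z → z ∈ F → z = m ∨ R z m) :
    m ∈ maxSet R F := by
  refine ⟨hmF, fun z hmz hzF => ?_⟩
  rcases hm z hmz hzF with hzm | hzm
  · exact hzm
  by_contra hne
  obtain ⟨V, hV, hmV, hVz⟩ := hbasis m {z}ᶜ isOpen_compl_singleton (Ne.symm hne)
  have hzA : z ∉ V ∪ Fᶜ := by
    rintro (hzV | hzF')
    exacts [hVz hzV rfl, hzF' hzF]
  -- Grz for `V ∪ Fᶜ` at `z`: a point `y` of `F \ V` seen from `z` sees `m ∈ V`, which sees `z ∉ V`.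
  refine hzA (hgrz _ (hV.union hF.compl) z fun y hzy hy => ?_)
  by_contra hyA
  have hyF : y ∈ F := by_contra fun h => hyA (Or.inr h)
  rcases hm y (htrans hmz hzy) hyF with rfl | hym
  · exact hyA (Or.inl hmV)
  · exact hzA (hy m hym (Or.inl hmV) z hmz)

theorem exists_rel_mem_maxSet_of_grz [CompactSpace X] [T1Space X]
    (hbasis : ∀ (x : X) (U : Set X), IsOpen U → x ∈ U →
      ∃ V : Set X, IsClopen V ∧ x ∈ V ∧ V ⊆ U)
    (hpointClosed : ∀ x : X, IsClosed {y | R x y}) (htrans : Transitive R)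
    (hgrz : ∀ U : Set X, IsClopen U → ∀ x : X,
      (∀ y, R x y → ((∀ z, R y z → (z ∈ U → ∀ w, R z w → w ∈ U)) → y ∈ U)) → x ∈ U)
    {F : Set X} (hF : IsClopen F) {x y : X} (hxy : R x y) (hyF : y ∈ F) :
    ∃ m, R x m ∧ m ∈ maxSet R F := by
  obtain ⟨m, ⟨hxm, hmF⟩, hm⟩ := exists_mem_forall_eq_or_rel_of_isClosed hpointClosed htrans
    ((hpointClosed x).inter hF.isClosed) ⟨y, hxy, hyF⟩
  refine ⟨m, hxm, mem_maxSet_of_grz hbasis htrans hgrz hF hmF fun z hmz hzF => ?_⟩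
  exact hm z hmz ⟨htrans hxm hmz, hzF⟩

end

theorem not_rel_self_of_mem_maxSet_of_lob {X : Type*} [TopologicalSpace X] {R : X → X → Prop}
    (hlob : ∀ U : Set X, IsClopen U → ∀ x : X,
      (∀ y, R x y → ((∀ z, R y z → z ∈ U) → y ∈ U)) → (∀ y, R x y → y ∈ U))
    {U : Set X} (hU : IsClopen U) {x : X} (hx : x ∈ maxSet R U) : ¬ R x x := by
  intro hxx
  refine hlob Uᶜ hU.compl x (fun y hxy hy hyU => ?_) x hxx hx.1
  obtain rfl := hx.2 y hxy hyU
  exact hy y hxx hyU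

theorem notMem_of_mem_maxSet_of_not_rel_self {X : Type*} {R : X → X → Prop}
    {F : Set X} {m : X} (hm : m ∈ maxSet R F) (hmm : ¬ R m m) :
    ∀ z, R m z → z ∉ F := by
  intro z hmz hzF
  obtain rfl := hm.2 z hmz hzF
  exact hmm hmz

theorem lob_iff_max_irreflexive_of_grz_general {X : Type*} [TopologicalSpace X]
    [CompactSpace X] [T2Space X] (R : X → X → Prop)
    (hbasis : ∀ (x : X) (U : Set X), IsOpen U → x ∈ U →
      ∃ V : Set X, IsClopen V ∧ x ∈ V ∧ V ⊆ U)
    (hpointClosed : ∀ x : X, IsClosed {y | R x y})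
    (htrans : Transitive R)
    (hgrz : ∀ U : Set X, IsClopen U → ∀ x : X,
      (∀ y, R x y → ((∀ z, R y z → (z ∈ U → ∀ w, R z w → w ∈ U)) → y ∈ U)) →
      x ∈ U) :
    ((∀ U : Set X, IsClopen U → ∀ x : X,
        (∀ y, R x y → ((∀ z, R y z → z ∈ U) → y ∈ U)) → (∀ y, R x y → y ∈ U))
      ↔
     (∀ U : Set X, IsClopen U → ∀ x ∈ maxSet R U, ¬ R x x)) := by
  refine ⟨fun hlob U hU x hx => not_rel_self_of_mem_maxSet_of_lob hlob hU hx, ?_⟩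
  intro hirr U hU x hx y hxy
  by_contra hyU
  obtain ⟨m, hxm, hm⟩ :=
    exists_rel_mem_maxSet_of_grz hbasis hpointClosed htrans hgrz hU.compl hxy hyU
  have hboxU : ∀ z, R m z → z ∈ U := fun z hmz =>
    not_not.1 (notMem_of_mem_maxSet_of_not_rel_self hm (hirr _ hU.compl m hm) z hmz)
  exact hm.1 (hx m hxm hboxU)

/-- A transitive modal space validating the Grzegorczyk axiom
validates the Löb axiom iff no `R`-maximal point of any clopen set is
`R`-reflexive. -/
theorem lob_iff_max_irreflexive_of_grz {X : Type*} [TopologicalSpace X]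
    [CompactSpace X] [T2Space X] (R : X → X → Prop)
    (hbasis : ∀ (x : X) (U : Set X), IsOpen U → x ∈ U →
      ∃ V : Set X, IsClopen V ∧ x ∈ V ∧ V ⊆ U)
    (hpointClosed : ∀ x : X, IsClosed {y | R x y})
    (hdownClopen : ∀ U : Set X, IsClopen U → IsClopen {x | ∃ y ∈ U, R x y})
    (htrans : Transitive R)
    (hgrz : ∀ U : Set X, IsClopen U → ∀ x : X,
      (∀ y, R x y → ((∀ z, R y z → (z ∈ U → ∀ w, R z w → w ∈ U)) → y ∈ U)) →
      x ∈ U) :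
    ((∀ U : Set X, IsClopen U → ∀ x : X,
        (∀ y, R x y → ((∀ z, R y z → z ∈ U) → y ∈ U)) → (∀ y, R x y → y ∈ U))
      ↔
     (∀ U : Set X, IsClopen U → ∀ x ∈ maxSet R U, ¬ R x x)) :=
  lob_iff_max_irreflexive_of_grz_general R hbasis hpointClosed htrans hgrz
end

section
/- Let X and Y be GL-spaces, f : X → Y a pre-stable map, and D a finite family of clopen subsets of Y such that f satisfies the BFC^R for D. Then f⁻¹(max_R d) = max_R (f⁻¹(d)) for every d ∈ D. -/
section Lob

variable {Z : Type*} [TopologicalSpace Z] {R : Z → Z → Prop}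

lemma exists_rel_forall_not_rel_of_lob
    (hlob : ∀ U : Set Z, IsClopen U → ∀ x : Z,
      (∀ y, R x y → ((∀ z, R y z → z ∈ U) → y ∈ U)) → (∀ y, R x y → y ∈ U))
    {V : Set Z} (hV : IsClopen V) {t w : Z} (hwV : w ∈ V) (htw : R t w) :
    ∃ w ∈ V, R t w ∧ ∀ z, R w z → z ∉ V := by
  by_contra! hc
  refine hlob Vᶜ hV.compl t ?_ w htw hwV
  intro y hty hy hyV
  obtain ⟨z, hyz, hzV⟩ := hc y hyV hty
  exact hy z hyz hzV

lemma mem_maxSet_iff_of_lob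
    (hlob : ∀ U : Set Z, IsClopen U → ∀ x : Z,
      (∀ y, R x y → ((∀ z, R y z → z ∈ U) → y ∈ U)) → (∀ y, R x y → y ∈ U))
    {U : Set Z} (hU : IsClopen U) {x : Z} :
    x ∈ maxSet R U ↔ x ∈ U ∧ ¬∃ y ∈ U, R x y := by
  constructor
  · rintro ⟨hxU, hxmax⟩
    refine ⟨hxU, fun ⟨y, hyU, hxy⟩ => ?_⟩
    obtain ⟨w, hwU, hxw, hw⟩ := exists_rel_forall_not_rel_of_lob hlob hU hyU hxy
    obtain rfl := hxmax w hxw hwU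
    exact hw y hxy hyU
  · rintro ⟨hxU, hx⟩
    exact ⟨hxU, fun y hxy hyU => (hx ⟨y, hyU, hxy⟩).elim⟩

end Lob

theorem preimage_max_eq_max_preimage_general {X Y : Type*}
    [TopologicalSpace X]
    [TopologicalSpace Y]
    (RX : X → X → Prop) (RY : Y → Y → Prop)
    (hlobX : ∀ U : Set X, IsClopen U → ∀ x : X,
      (∀ y, RX x y → ((∀ z, RX y z → z ∈ U) → y ∈ U)) → (∀ y, RX x y → y ∈ U))
    (hlobY : ∀ U : Set Y, IsClopen U → ∀ x : Y,
      (∀ y, RY x y → ((∀ z, RY y z → z ∈ U) → y ∈ U)) → (∀ y, RY x y → y ∈ U))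
    (f : X → Y) (hf : Continuous f)
    (D : Set (Set Y)) (hDclopen : ∀ d ∈ D, IsClopen d)
    (hBFC : ∀ (x : X), ∀ d ∈ D,
      ((∃ y ∈ d, RY (f x) y) ↔ (∃ z : X, RX x z ∧ f z ∈ d)))
    (d : Set Y) (hd : d ∈ D) :
    f ⁻¹' (maxSet RY d) = maxSet RX (f ⁻¹' d) := by
  have hdX : IsClopen (f ⁻¹' d) := (hDclopen d hd).preimage hf
  ext x
  rw [Set.mem_preimage, mem_maxSet_iff_of_lob hlobY (hDclopen d hd),
    mem_maxSet_iff_of_lob hlobX hdX, hBFC x d hd]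
  simp only [Set.mem_preimage, and_comm]

/-- For a pre-stable map `f` between GL-spaces satisfying the
BFC^R for a finite family `D` of clopens, `f⁻¹(max_R d) = max_R (f⁻¹ d)` for
every `d ∈ D`. -/
theorem preimage_max_eq_max_preimage {X Y : Type*}
    [TopologicalSpace X] [CompactSpace X] [T2Space X]
    [TopologicalSpace Y] [CompactSpace Y] [T2Space Y]
    (RX : X → X → Prop) (RY : Y → Y → Prop)
    (hbasisX : ∀ (x : X) (U : Set X), IsOpen U → x ∈ U →
      ∃ V : Set X, IsClopen V ∧ x ∈ V ∧ V ⊆ U)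
    (hpointX : ∀ x : X, IsClosed {y | RX x y})
    (hdownX : ∀ U : Set X, IsClopen U → IsClopen {x | ∃ y ∈ U, RX x y})
    (htransX : Transitive RX)
    (hlobX : ∀ U : Set X, IsClopen U → ∀ x : X,
      (∀ y, RX x y → ((∀ z, RX y z → z ∈ U) → y ∈ U)) → (∀ y, RX x y → y ∈ U))
    (hbasisY : ∀ (y : Y) (U : Set Y), IsOpen U → y ∈ U →
      ∃ V : Set Y, IsClopen V ∧ y ∈ V ∧ V ⊆ U)
    (hpointY : ∀ x : Y, IsClosed {y | RY x y})
    (hdownY : ∀ U : Set Y, IsClopen U → IsClopen {x | ∃ y ∈ U, RY x y})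
    (htransY : Transitive RY)
    (hlobY : ∀ U : Set Y, IsClopen U → ∀ x : Y,
      (∀ y, RY x y → ((∀ z, RY y z → z ∈ U) → y ∈ U)) → (∀ y, RY x y → y ∈ U))
    (f : X → Y) (hf : Continuous f)
    (hpre : ∀ x y : X, (x = y ∨ RX x y) → (f x = f y ∨ RY (f x) (f y)))
    (D : Set (Set Y)) (hDfin : D.Finite) (hDclopen : ∀ d ∈ D, IsClopen d)
    (hBFC : ∀ (x : X), ∀ d ∈ D,
      ((∃ y ∈ d, RY (f x) y) ↔ (∃ z : X, RX x z ∧ f z ∈ d)))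
    (d : Set Y) (hd : d ∈ D) :
    f ⁻¹' (maxSet RY d) = maxSet RX (f ⁻¹' d) :=
  preimage_max_eq_max_preimage_general RX RY hlobX hlobY f hf D hDclopen hBFC d hd
end

section
/- Let X be a GL-space and d ⊆ X a clopen set. Then max_R(↓_{R⁺} d) = max_R d, where ↓_{R⁺} d := {x : ∃y ∈ d, x = y ∨ R x y}. -/
namespace GLSpace

variable {X : Type*} (R : X → X → Prop)

def downClosure (d : Set X) : Set X :=
  {x | ∃ y ∈ d, x = y ∨ R x y}

def ValidatesLob [TopologicalSpace X] : Prop :=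
  ∀ U : Set X, IsClopen U → ∀ x : X,
    (∀ y, R x y → ((∀ z, R y z → z ∈ U) → y ∈ U)) → (∀ y, R x y → y ∈ U)

variable {R}

theorem mem_maxSet_of_subset {U V : Set X} (hUV : U ⊆ V) {x : X}
    (hx : x ∈ maxSet R V) (hxU : x ∈ U) : x ∈ maxSet R U :=
  ⟨hxU, fun y hxy hyU => hx.2 y hxy (hUV hyU)⟩

theorem subset_downClosure (d : Set X) : d ⊆ downClosure R d :=
  fun x hx => ⟨x, hx, Or.inl rfl⟩

theorem downClosure_eq_union (d : Set X) :
    downClosure R d = d ∪ {x | ∃ y ∈ d, R x y} := by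
  ext x
  simp only [downClosure, Set.mem_union, Set.mem_ofPred_eq, and_or_left, exists_or, @eq_comm _ x,
    exists_eq_right]

theorem isClopen_downClosure [TopologicalSpace X]
    (hdownClopen : ∀ U : Set X, IsClopen U → IsClopen {x | ∃ y ∈ U, R x y})
    {d : Set X} (hd : IsClopen d) : IsClopen (downClosure R d) :=
  downClosure_eq_union (R := R) d ▸ hd.union (hdownClopen d hd)

theorem mem_of_mem_maxSet_downClosure {d : Set X} {x : X}
    (hx : x ∈ maxSet R (downClosure R d)) : x ∈ d := by
  obtain ⟨y, hy, rfl | hxy⟩ := hx.1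
  · exact hy
  · obtain rfl : y = x := hx.2 y hxy (subset_downClosure d hy)
    exact hy

theorem maxSet_downClosure_subset (d : Set X) :
    maxSet R (downClosure R d) ⊆ maxSet R d :=
  fun _ hx => mem_maxSet_of_subset (subset_downClosure d) hx (mem_of_mem_maxSet_downClosure hx)

/-- Löb for the clopen set `(↓ d)ᶜ`: a successor of `x` in `↓ d` whose own successors all avoid
`↓ d` is either `x` itself, which sees `x ∈ ↓ d`, or sees a point of `d`. -/
theorem maxSet_subset_maxSet_downClosure [TopologicalSpace X] (hlob : ValidatesLob R)
    {d : Set X} (hD : IsClopen (downClosure R d)) :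
    maxSet R d ⊆ maxSet R (downClosure R d) := by
  rintro x ⟨hxd, hmax⟩
  have hsucc : ∀ y, R x y → y ∈ (downClosure R d)ᶜ := by
    refine hlob _ hD.compl x fun y hxy hyAvoids ⟨w, hw, hyw⟩ => ?_
    rcases hyw with rfl | hyw
    · obtain rfl : y = x := hmax y hxy hw
      exact hyAvoids y hxy (subset_downClosure d hw)
    · exact hyAvoids w hyw (subset_downClosure d hw)
  exact ⟨subset_downClosure d hxd, fun y hxy hyD => absurd hyD (hsucc y hxy)⟩

end GLSpace

open GLSpace in
theorem max_downset_eq_max_general {X : Type*} [TopologicalSpace X]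
    (R : X → X → Prop)
    (hdownClopen : ∀ U : Set X, IsClopen U → IsClopen {x | ∃ y ∈ U, R x y})
    (hlob : ∀ U : Set X, IsClopen U → ∀ x : X,
      (∀ y, R x y → ((∀ z, R y z → z ∈ U) → y ∈ U)) → (∀ y, R x y → y ∈ U))
    (d : Set X) (hd : IsClopen d) :
    maxSet R {x | ∃ y ∈ d, x = y ∨ R x y} = maxSet R d :=
  (maxSet_downClosure_subset d).antisymm
    (maxSet_subset_maxSet_downClosure hlob (isClopen_downClosure hdownClopen hd))

/-- In a GL-space, for any clopen `d`,
`max_R (↓_{R⁺} d) = max_R d`, where `↓_{R⁺} d = {x | ∃ y ∈ d, x = y ∨ R x y}`. -/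
theorem max_downset_eq_max {X : Type*} [TopologicalSpace X]
    [CompactSpace X] [T2Space X] (R : X → X → Prop)
    (hbasis : ∀ (x : X) (U : Set X), IsOpen U → x ∈ U →
      ∃ V : Set X, IsClopen V ∧ x ∈ V ∧ V ⊆ U)
    (hpointClosed : ∀ x : X, IsClosed {y | R x y})
    (hdownClopen : ∀ U : Set X, IsClopen U → IsClopen {x | ∃ y ∈ U, R x y})
    (htrans : Transitive R)
    (hlob : ∀ U : Set X, IsClopen U → ∀ x : X,
      (∀ y, R x y → ((∀ z, R y z → z ∈ U) → y ∈ U)) → (∀ y, R x y → y ∈ U))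
    (d : Set X) (hd : IsClopen d) :
    maxSet R {x | ∃ y ∈ d, x = y ∨ R x y} = maxSet R d :=
  max_downset_eq_max_general R hdownClopen hlob d hd
end
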